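/- Let S(x_1,...,x_N) be a multivariate tensor-product B-spline. If for a fixed coordinate j the coefficients satisfy (a_{...i_j...} - a_{...(i_j-1)...})/Δ_{i_j} ≤ (a_{...(i_j-1)...} - a_{...(i_j-2)...})/Δ_{i_j-1} for all multi-indices, where Δ_{i_j} = t_{j,i_j+r_j} - t_{j,i_j}, then S is concave in the variable x_j (with the other variables held fixed) on the interior knot range. -/

import Mathlib

/-- Cox–de Boor B-spline basis function `B_i^r(x; t)`, with the convention that
terms with zero denominator vanish (division by zero is zero in Lean). -/
noncomputable def Bspl (t : ℕ → ℝ) : ℕ → ℕ → ℝ → ℝ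
  | 0, i, x => if t i ≤ x ∧ x < t (i + 1) then 1 else 0
  | r + 1, i, x =>
      (x - t i) / (t (i + r + 1) - t i) * Bspl t r i x
        + (t (i + r + 2) - x) / (t (i + r + 2) - t (i + 1)) * Bspl t r (i + 1) x

/-!
Splitting a multi-index as `Fin.insertNth j k o`, the function is `∑ₒ wₒ • Sₒ`, where `wₒ ≥ 0` is
a product of B-spline values in the fixed coordinates and `Sₒ = ∑ₖ a (insertNth j k o) Bₖ` is a
univariate spline satisfying the same slope condition; so it suffices to treat one variable.

For strictly increasing knots the right derivative of `∑ₖ cₖ B_k^{r+1}` is `(r + 1) ∑ₖ σₖ B_k^r`,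
where `σₖ` are the scaled slopes of the coefficients. A spline with antitone coefficients is
antitone (de Boor step plus clamping of the interpolated coefficients), so this derivative is
antitone and the spline is concave. Arbitrary monotone knots are approximated from below by
strictly increasing ones, along which B-splines converge pointwise, and concavity passes to the
limit. Continuing the control polygon linearly beyond its last vertex makes the right endpoint
`t n` an interior point of the approximating intervals without changing the spline on
`[t r, t n]`.
-/

open Filter Topology Set

lemma sum_Ico_mul_add_mul_succ {R : Type*} [Semiring R] (f g b : ℕ → R) {p q : ℕ}
    (hp : b p = 0) (hq : b q = 0) :
    ∑ k ∈ Finset.Ico p q, (f k * b k + g k * b (k + 1))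
      = ∑ k ∈ Finset.Ico (p + 1) q, (f k + g (k - 1)) * b k := by
  rcases le_or_gt q p with hqp | hpq
  · simp [Finset.Ico_eq_empty_of_le hqp, Finset.Ico_eq_empty_of_le (hqp.trans (Nat.le_succ p))]
  have hshift : ∑ k ∈ Finset.Ico p q, g k * b (k + 1)
      = ∑ k ∈ Finset.Ico (p + 1) (q + 1), g (k - 1) * b k := by
    rw [← Finset.sum_Ico_add']
    simp
  rw [Finset.sum_add_distrib, hshift, Finset.sum_eq_sum_Ico_succ_bot hpq, hp,
    Finset.sum_Ico_succ_top (by omega), hq]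
  simp [add_mul, Finset.sum_add_distrib]

theorem concaveOn_Icc_of_hasDerivWithinAt_Ici {f f' : ℝ → ℝ} {a b : ℝ}
    (hf : ContinuousOn f (Icc a b)) (hf' : ∀ x ∈ Ico a b, HasDerivWithinAt f (f' x) (Ici x) x)
    (hanti : AntitoneOn f' (Ico a b)) : ConcaveOn ℝ (Icc a b) f := by
  refine concaveOn_of_slope_anti_adjacent (convex_Icc a b) fun {x y z} hx hz hxy hyz => ?_
  have hy : y ∈ Ico a b := ⟨hx.1.trans hxy.le, hyz.trans_le hz.2⟩
  have tangent : ∀ u w, HasDerivWithinAt (fun v => f u + f' y * (v - u)) (f' y) (Ici w) w :=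
    fun u w => by
      simpa using ((((hasDerivAt_id' w).sub_const u).const_mul (f' y)).const_add
        (f u)).hasDerivWithinAt
  have htc : ∀ u, ContinuousOn (fun v => f u + f' y * (v - u)) (Icc a b) := fun u => by
    fun_prop
  -- the tangent line at `y` lies below `f` on `[x, y]` and above it on `[y, z]`
  have hl : f x + f' y * (y - x) ≤ f y :=
    image_le_of_deriv_right_le_deriv_boundary ((htc x).mono (Icc_subset_Icc hx.1 hy.2.le))
      (fun w _ => tangent x w) (by simp) (hf.mono (Icc_subset_Icc hx.1 hy.2.le))
      (fun w hw => hf' w ⟨hx.1.trans hw.1, hw.2.trans hy.2⟩)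
      (fun w hw => hanti ⟨hx.1.trans hw.1, hw.2.trans hy.2⟩ hy hw.2.le) ⟨hxy.le, le_rfl⟩
  have hr : f z ≤ f y + f' y * (z - y) :=
    image_le_of_deriv_right_le_deriv_boundary (hf.mono (Icc_subset_Icc hy.1 hz.2))
      (fun w hw => hf' w ⟨hy.1.trans hw.1, hw.2.trans_le hz.2⟩) (by simp)
      ((htc y).mono (Icc_subset_Icc hy.1 hz.2)) (fun w _ => tangent y w)
      (fun w hw => hanti hy ⟨hy.1.trans hw.1, hw.2.trans_le hz.2⟩ hw.1) ⟨hyz.le, le_rfl⟩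
  calc (f z - f y) / (z - y) ≤ f' y := by rw [div_le_iff₀ (sub_pos.2 hyz)]; linarith
    _ ≤ (f y - f x) / (y - x) := by rw [le_div_iff₀ (sub_pos.2 hxy)]; linarith

theorem concaveOn_of_tendsto {ι E : Type*} [AddCommGroup E] [Module ℝ E] {l : Filter ι} [l.NeBot]
    {s : Set E} {S : ι → Set E} {f : ι → E → ℝ} {g : E → ℝ} (hs : Convex ℝ s)
    (hf : ∀ m, ConcaveOn ℝ (S m) (f m)) (hS : ∀ x ∈ s, ∀ᶠ m in l, x ∈ S m)
    (hg : ∀ x ∈ s, Tendsto (fun m => f m x) l (𝓝 (g x))) : ConcaveOn ℝ s g := by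
  refine ⟨hs, fun x hx y hy a b ha hb hab => ?_⟩
  refine le_of_tendsto_of_tendsto (((hg x hx).const_smul a).add ((hg y hy).const_smul b))
    (hg _ (hs hx hy ha hb hab)) ?_
  filter_upwards [hS x hx, hS y hy] with m hxm hym
  exact (hf m).2 hxm hym ha hb hab

theorem concaveOn_finsetSum {𝕜 E β ι : Type*} [Semiring 𝕜] [PartialOrder 𝕜] [AddCommMonoid E]
    [AddCommMonoid β] [PartialOrder β] [IsOrderedAddMonoid β] [SMul 𝕜 E] [Module 𝕜 β]
    {S : Set E} {s : Finset ι} {f : ι → E → β} (hS : Convex 𝕜 S)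
    (hf : ∀ i ∈ s, ConcaveOn 𝕜 S (f i)) : ConcaveOn 𝕜 S (fun x => ∑ i ∈ s, f i x) := by
  rw [← Finset.sum_fn]
  exact Finset.sum_induction f (ConcaveOn 𝕜 S) (fun _ _ => ConcaveOn.add) (concaveOn_const 0 hS) hf

section Interpolant

variable {𝕜 : Type*} [Field 𝕜] [LinearOrder 𝕜] [IsStrictOrderedRing 𝕜]

lemma interpolant_mem_Icc {a b u v w : 𝕜} (hab : a < b) (huv : u ≤ v) (haw : a ≤ w) (hwb : w ≤ b) :
    ((w - a) * u + (b - w) * v) / (b - a) ∈ Icc u v := by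
  rw [mem_Icc, le_div_iff₀ (sub_pos.2 hab), div_le_iff₀ (sub_pos.2 hab)]
  constructor <;> nlinarith

lemma antitone_interpolant {a b u v : 𝕜} (hab : a < b) (huv : u ≤ v) :
    Antitone fun w => ((w - a) * u + (b - w) * v) / (b - a) :=
  fun _ _ h => div_le_div_of_nonneg_right (by nlinarith) (sub_pos.2 hab).le

end Interpolant

section Univariate

variable {t : ℕ → ℝ}

variable (t) in
lemma bspl_zero (i : ℕ) (x : ℝ) :
    Bspl t 0 i x = if t i ≤ x ∧ x < t (i + 1) then 1 else 0 := rfl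

variable (t) in
lemma bspl_succ (r i : ℕ) (x : ℝ) :
    Bspl t (r + 1) i x =
      (x - t i) / (t (i + r + 1) - t i) * Bspl t r i x
        + (t (i + r + 2) - x) / (t (i + r + 2) - t (i + 1)) * Bspl t r (i + 1) x := rfl

lemma bspl_eq_zero_of_lt (ht : Monotone t) : ∀ (r i : ℕ) {x : ℝ}, x < t i → Bspl t r i x = 0
  | 0, i, x, hx => by rw [bspl_zero, if_neg (by rintro ⟨h, -⟩; linarith)]
  | r + 1, i, x, hx => by
    rw [bspl_succ, bspl_eq_zero_of_lt ht r i hx,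
      bspl_eq_zero_of_lt ht r (i + 1) (hx.trans_le (ht (Nat.le_succ i)))]
    ring

lemma bspl_eq_zero_of_le (ht : Monotone t) :
    ∀ (r i : ℕ) {x : ℝ}, t (i + r + 1) ≤ x → Bspl t r i x = 0
  | 0, i, x, hx => by rw [bspl_zero, if_neg (by rintro ⟨-, h⟩; linarith)]
  | r + 1, i, x, hx => by
    rw [bspl_succ, bspl_eq_zero_of_le ht r i ((ht (by omega)).trans hx),
      bspl_eq_zero_of_le ht r (i + 1) (by rwa [show i + 1 + r + 1 = i + (r + 1) + 1 by omega])]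
    ring

lemma mem_Ico_of_bspl_ne_zero (ht : Monotone t) {r i : ℕ} {x : ℝ} (h : Bspl t r i x ≠ 0) :
    x ∈ Ico (t i) (t (i + r + 1)) :=
  ⟨not_lt.1 fun hx => h (bspl_eq_zero_of_lt ht r i hx),
    not_le.1 fun hx => h (bspl_eq_zero_of_le ht r i hx)⟩

lemma bspl_nonneg (ht : Monotone t) : ∀ (r i : ℕ) (x : ℝ), 0 ≤ Bspl t r i x
  | 0, i, x => by rw [bspl_zero]; split_ifs <;> norm_num
  | r + 1, i, x => by
    have hB := bspl_nonneg ht r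
    rw [bspl_succ]
    apply add_nonneg
    · rcases eq_or_ne (Bspl t r i x) 0 with h | h
      · simp [h]
      · have hx := mem_Ico_of_bspl_ne_zero ht h
        have : t i ≤ t (i + r + 1) := ht (by omega)
        exact mul_nonneg (div_nonneg (by linarith [hx.1]) (by linarith)) (hB i x)
    · rcases eq_or_ne (Bspl t r (i + 1) x) 0 with h | h
      · simp [h]
      · have hx := mem_Ico_of_bspl_ne_zero ht h
        have : t (i + 1) ≤ t (i + r + 2) := ht (by omega)
        rw [show i + 1 + r + 1 = i + r + 2 by omega] at hx
        exact mul_nonneg (div_nonneg (by linarith [hx.2]) (by linarith)) (hB (i + 1) x)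

lemma bspl_eq_zero_of_le_left (ht : Monotone t) :
    ∀ (r i : ℕ) {x : ℝ}, t i < t (i + r) → x ≤ t i → Bspl t r i x = 0
  | 0, i, x, hi, _ => by simp at hi
  | r + 1, i, x, hi, hx => by
    rcases hx.lt_or_eq with hx | rfl
    · exact bspl_eq_zero_of_lt ht _ i hx
    rw [bspl_succ, sub_self, zero_div, zero_mul, zero_add]
    rcases (ht (Nat.le_succ i)).lt_or_eq with h | h
    · rw [bspl_eq_zero_of_lt ht r (i + 1) h, mul_zero]
    · have hi' : t (i + 1) < t (i + 1 + r) := by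
        rwa [← h, show i + 1 + r = i + (r + 1) by omega]
      rw [bspl_eq_zero_of_le_left ht r (i + 1) hi' h.le, mul_zero]

/-- The de Boor step: the coefficients in degree `r` are affine interpolants of consecutive
coefficients. -/
lemma sum_bspl_succ (ht : Monotone t) (d : ℕ → ℝ) (r p q : ℕ) {x : ℝ}
    (hpx : t (p + r + 1) ≤ x) (hxq : x < t q) :
    ∑ k ∈ Finset.Ico p q, d k * Bspl t (r + 1) k x
      = ∑ k ∈ Finset.Ico (p + 1) q,
          ((x - t k) * d k + (t (k + r + 1) - x) * d (k - 1)) / (t (k + r + 1) - t k)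
            * Bspl t r k x := by
  have h := sum_Ico_mul_add_mul_succ (fun k => d k * ((x - t k) / (t (k + r + 1) - t k)))
    (fun k => d k * ((t (k + r + 2) - x) / (t (k + r + 2) - t (k + 1)))) (Bspl t r · x)
    (bspl_eq_zero_of_le ht r p hpx) (bspl_eq_zero_of_lt ht r q hxq)
  simp only [bspl_succ]
  convert h using 1
  · exact Finset.sum_congr rfl fun k _ => by ring
  · refine Finset.sum_congr rfl fun k hk => ?_
    obtain ⟨k, rfl⟩ : ∃ k', k = k' + 1 := ⟨k - 1, by simp at hk; omega⟩
    simp only [Nat.add_sub_cancel, show k + r + 2 = k + 1 + r + 1 by omega]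
    ring

lemma exists_mem_Ico_knots (ht : Monotone t) {p : ℕ} {x : ℝ} (hpx : t p ≤ x) :
    ∀ {q : ℕ}, x < t q → ∃ k ∈ Finset.Ico p q, t k ≤ x ∧ x < t (k + 1)
  | 0, hxq => absurd ((ht (Nat.zero_le p)).trans hpx) (not_le.2 hxq)
  | q + 1, hxq => by
    by_cases hq : x < t q
    · obtain ⟨k, hk, hkx⟩ := exists_mem_Ico_knots ht hpx hq
      exact ⟨k, Finset.Ico_subset_Ico_right (Nat.le_succ q) hk, hkx⟩
    · have hpq : p ≤ q := by
        by_contra h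
        exact absurd (hxq.trans_le (ht (by omega : q + 1 ≤ p))) (not_lt.2 hpx)
      exact ⟨q, Finset.mem_Ico.2 ⟨hpq, Nat.lt_succ_self q⟩, not_lt.1 hq, hxq⟩

lemma sum_bspl_zero_eq (ht : Monotone t) (d : ℕ → ℝ) {p q k : ℕ} {x : ℝ}
    (hk : k ∈ Finset.Ico p q) (hkx : t k ≤ x) (hxk : x < t (k + 1)) :
    ∑ i ∈ Finset.Ico p q, d i * Bspl t 0 i x = d k := by
  rw [Finset.sum_eq_single_of_mem k hk, bspl_zero, if_pos ⟨hkx, hxk⟩, mul_one]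
  intro i _ hik
  rw [bspl_zero, if_neg, mul_zero]
  rintro ⟨hix, hxi⟩
  rcases hik.lt_or_gt with h | h
  · exact absurd ((ht (show i + 1 ≤ k by omega)).trans hkx) (not_le.2 hxi)
  · exact absurd ((ht (show k + 1 ≤ i by omega)).trans hix) (not_le.2 hxk)

lemma antitoneOn_sum_bspl_zero (ht : Monotone t) {p q : ℕ} {d : ℕ → ℝ} (hd : AntitoneOn d (Ici p)) :
    AntitoneOn (fun x => ∑ k ∈ Finset.Ico p q, d k * Bspl t 0 k x) (Ico (t p) (t q)) := by
  intro x hx y hy hxy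
  obtain ⟨kx, hkx, hkx'⟩ := exists_mem_Ico_knots ht hx.1 hx.2
  obtain ⟨ky, hky, hky'⟩ := exists_mem_Ico_knots ht hy.1 hy.2
  simp only [sum_bspl_zero_eq ht d hkx hkx'.1 hkx'.2, sum_bspl_zero_eq ht d hky hky'.1 hky'.2]
  have hk : kx ≤ ky := by
    by_contra h
    exact absurd ((ht (by omega : ky + 1 ≤ kx)).trans (hkx'.1.trans hxy)) (not_le.2 hky'.2)
  exact hd (Finset.mem_Ico.1 hkx).1 (Finset.mem_Ico.1 hky).1 hk

/-- On `[t (p + r), t q)` the B-splines `B_p, …, B_{q-1}` of degree `r` sum to one. -/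
lemma antitoneOn_sum_bspl (ht : Monotone t) {q : ℕ} :
    ∀ (r p : ℕ) {d : ℕ → ℝ}, AntitoneOn d (Ici p) →
      AntitoneOn (fun x => ∑ k ∈ Finset.Ico p q, d k * Bspl t r k x) (Ico (t (p + r)) (t q))
  | 0, p, d, hd => antitoneOn_sum_bspl_zero ht hd
  | r + 1, p, d, hd => by
    intro x hx y hy hxy
    rw [show p + (r + 1) = p + r + 1 by omega] at hx hy
    set D : ℕ → ℝ → ℝ := fun k w =>
      ((w - t k) * d k + (t (k + r + 1) - w) * d (k - 1)) / (t (k + r + 1) - t k)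
    have hdk : ∀ k ∈ Finset.Ico (p + 1) q, d k ≤ d (k - 1) := fun k hk => by
      simp only [Finset.mem_Ico] at hk
      exact hd (mem_Ici.2 (by omega)) (mem_Ici.2 (by omega)) (by omega)
    have hD : ∀ k ∈ Finset.Ico (p + 1) q, ∀ w, Bspl t r k w ≠ 0 →
        D k w ∈ Icc (d k) (d (k - 1)) ∧ Antitone (D k) := fun k hk w hw => by
      obtain ⟨hkw, hwk⟩ := mem_Ico_of_bspl_ne_zero ht hw
      exact ⟨interpolant_mem_Icc (hkw.trans_lt hwk) (hdk k hk) hkw hwk.le,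
        antitone_interpolant (hkw.trans_lt hwk) (hdk k hk)⟩
    -- clamping `D k y` to `[d k, d (k - 1)]` gives antitone coefficients that agree with `D · y`
    set E : ℕ → ℝ := fun k => max (d k) (min (d (k - 1)) (D k y))
    have hE : AntitoneOn E (Ici (p + 1)) := by
      intro k hk l hl hkl
      rcases hkl.eq_or_lt with rfl | hkl
      · exact le_rfl
      rw [mem_Ici] at hk hl
      have h₁ : d l ≤ d (l - 1) := hd (mem_Ici.2 (by omega)) (mem_Ici.2 (by omega)) (by omega)
      have h₂ : d (l - 1) ≤ d k := hd (mem_Ici.2 (by omega)) (mem_Ici.2 (by omega)) (by omega)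
      exact max_le (h₁.trans (h₂.trans (le_max_left _ _)))
        ((min_le_left _ _).trans (h₂.trans (le_max_left _ _)))
    have hxr : t (p + 1 + r) ≤ x := by rw [show p + 1 + r = p + r + 1 by omega]; exact hx.1
    simp only [sum_bspl_succ ht d r p q hy.1 hy.2, sum_bspl_succ ht d r p q hx.1 hx.2]
    calc ∑ k ∈ Finset.Ico (p + 1) q, D k y * Bspl t r k y
        = ∑ k ∈ Finset.Ico (p + 1) q, E k * Bspl t r k y := by
          refine Finset.sum_congr rfl fun k hk => ?_
          rcases eq_or_ne (Bspl t r k y) 0 with h | h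
          · simp [h]
          · obtain ⟨⟨h₁, h₂⟩, -⟩ := hD k hk y h
            simp only [E, min_eq_right h₂, max_eq_right h₁]
      _ ≤ ∑ k ∈ Finset.Ico (p + 1) q, E k * Bspl t r k x :=
          antitoneOn_sum_bspl ht r (p + 1) hE ⟨hxr, hx.2⟩ ⟨hxr.trans hxy, hy.2⟩ hxy
      _ ≤ ∑ k ∈ Finset.Ico (p + 1) q, D k x * Bspl t r k x := by
          refine Finset.sum_le_sum fun k hk => ?_
          rcases eq_or_ne (Bspl t r k x) 0 with h | h
          · simp [h]
          · obtain ⟨⟨h₁, -⟩, hanti⟩ := hD k hk x h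
            exact mul_le_mul_of_nonneg_right (max_le h₁ ((min_le_right _ _).trans (hanti hxy)))
              (bspl_nonneg ht r k x)

variable (t) in
lemma bspl_zero_eventuallyEq (i : ℕ) (w : ℝ) :
    Bspl t 0 i =ᶠ[𝓝[≥] w] fun _ => Bspl t 0 i w := by
  by_cases h₁ : w < t i
  · filter_upwards [nhdsWithin_le_nhds (Iio_mem_nhds h₁)] with x hx
    rw [bspl_zero, bspl_zero, if_neg fun h => not_le.2 hx h.1, if_neg fun h => not_le.2 h₁ h.1]
  by_cases h₂ : w < t (i + 1)
  · filter_upwards [Ico_mem_nhdsGE h₂] with x hx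
    rw [bspl_zero, bspl_zero, if_pos ⟨(not_lt.1 h₁).trans hx.1, hx.2⟩, if_pos ⟨not_lt.1 h₁, h₂⟩]
  · filter_upwards [self_mem_nhdsWithin] with x (hx : w ≤ x)
    rw [bspl_zero, bspl_zero, if_neg fun h => h₂ (hx.trans_lt h.2), if_neg fun h => h₂ h.2]

variable (t) in
lemma hasDerivWithinAt_bspl_zero (i : ℕ) (w : ℝ) :
    HasDerivWithinAt (Bspl t 0 i) 0 (Ici w) w :=
  (hasDerivWithinAt_const w _ _).congr_of_eventuallyEq (bspl_zero_eventuallyEq t i w) rfl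

lemma hasDerivWithinAt_bspl_succ_of {r i : ℕ} {w β₁ β₂ : ℝ} {s : Set ℝ}
    (h₁ : HasDerivWithinAt (Bspl t r i) β₁ s w) (h₂ : HasDerivWithinAt (Bspl t r (i + 1)) β₂ s w) :
    HasDerivWithinAt (Bspl t (r + 1) i)
      (Bspl t r i w / (t (i + r + 1) - t i) + (w - t i) / (t (i + r + 1) - t i) * β₁
        - Bspl t r (i + 1) w / (t (i + r + 2) - t (i + 1))
        + (t (i + r + 2) - w) / (t (i + r + 2) - t (i + 1)) * β₂) s w := by
  have hl : HasDerivWithinAt (fun x => (x - t i) / (t (i + r + 1) - t i))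
      (1 / (t (i + r + 1) - t i)) s w :=
    (((hasDerivAt_id' w).sub_const (t i)).div_const _).hasDerivWithinAt
  have hr : HasDerivWithinAt (fun x => (t (i + r + 2) - x) / (t (i + r + 2) - t (i + 1)))
      (-1 / (t (i + r + 2) - t (i + 1))) s w :=
    (((hasDerivAt_id' w).const_sub _).div_const _).hasDerivWithinAt
  rw [show Bspl t (r + 1) i = _ from funext (bspl_succ t r i)]
  exact ((hl.fun_mul h₁).fun_add (hr.fun_mul h₂)).congr_deriv (by ring)

/-- Right derivatives, since `B^0` is only right-continuous at the knots. -/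
lemma hasDerivWithinAt_bspl (hst : StrictMono t) : ∀ (r i : ℕ) (w : ℝ),
    HasDerivWithinAt (Bspl t (r + 1) i)
      ((r + 1) * (Bspl t r i w / (t (i + r + 1) - t i)
        - Bspl t r (i + 1) w / (t (i + r + 2) - t (i + 1)))) (Ici w) w
  | 0, i, w => (hasDerivWithinAt_bspl_succ_of (hasDerivWithinAt_bspl_zero t i w)
      (hasDerivWithinAt_bspl_zero t (i + 1) w)).congr_deriv (by ring)
  | r + 1, i, w => by
    refine (hasDerivWithinAt_bspl_succ_of (hasDerivWithinAt_bspl hst r i w)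
      (hasDerivWithinAt_bspl hst r (i + 1) w)).congr_deriv ?_
    have hne : ∀ a b : ℕ, a < b → t b - t a ≠ 0 := fun a b h => sub_ne_zero.2 (hst h).ne'
    have h₁ := hne i (i + r + 1) (by omega)
    have h₂ := hne (i + 1) (i + r + 2) (by omega)
    have h₃ := hne (i + 2) (i + r + 3) (by omega)
    have h₄ := hne i (i + r + 2) (by omega)
    have h₅ := hne (i + 1) (i + r + 3) (by omega)
    rw [bspl_succ t r i w, bspl_succ t r (i + 1) w]
    simp only [show i + 1 + r + 1 = i + r + 2 by omega, show i + 1 + r + 2 = i + r + 3 by omega,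
      show i + (r + 1) + 1 = i + r + 2 by omega, show i + (r + 1) + 2 = i + r + 3 by omega,
      show i + 1 + 1 = i + 2 by omega]
    push_cast
    field_simp
    ring

lemma bspl_one_eq_max_min (hst : StrictMono t) (i : ℕ) (x : ℝ) :
    Bspl t 1 i x = max 0 (min ((x - t i) / (t (i + 1) - t i))
      ((t (i + 2) - x) / (t (i + 2) - t (i + 1)))) := by
  have h₁ : 0 < t (i + 1) - t i := sub_pos.2 (hst (by omega))
  have h₂ : 0 < t (i + 2) - t (i + 1) := sub_pos.2 (hst (by omega))
  rw [bspl_succ, bspl_zero, bspl_zero]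
  simp only [Nat.add_zero, show i + 0 + 2 = i + 2 by omega]
  split_ifs with hA hB hB
  · linarith [hA.2, hB.1]
  · have hu : (x - t i) / (t (i + 1) - t i) ≤ 1 := by rw [div_le_one h₁]; linarith
    have hv : 1 ≤ (t (i + 2) - x) / (t (i + 2) - t (i + 1)) := by rw [one_le_div h₂]; linarith
    rw [min_eq_left (hu.trans hv), max_eq_right (div_nonneg (by linarith) h₁.le)]
    ring
  · have hu : (t (i + 2) - x) / (t (i + 2) - t (i + 1)) ≤ 1 := by rw [div_le_one h₂]; linarith
    have hv : 1 ≤ (x - t i) / (t (i + 1) - t i) := by rw [one_le_div h₁]; linarith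
    rw [min_eq_right (hu.trans hv), max_eq_right (div_nonneg (by linarith) h₂.le)]
    ring
  · rw [max_eq_left]
    · ring
    rcases lt_or_ge x (t i) with hx | hx
    · exact (min_le_left _ _).trans (div_nonpos_of_nonpos_of_nonneg (by linarith) h₁.le)
    · have : t (i + 2) ≤ x := by
        by_contra h
        by_cases h' : x < t (i + 1)
        · exact hA ⟨hx, h'⟩
        · exact hB ⟨not_lt.1 h', not_le.1 h⟩
      exact (min_le_right _ _).trans (div_nonpos_of_nonpos_of_nonneg (by linarith) h₂.le)

lemma continuous_bspl_succ (hst : StrictMono t) : ∀ r i, Continuous (Bspl t (r + 1) i)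
  | 0, i => by
    rw [show Bspl t 1 i = _ from funext (bspl_one_eq_max_min hst i)]
    fun_prop
  | r + 1, i => by
    rw [show Bspl t (r + 2) i = _ from funext (bspl_succ t (r + 1) i)]
    have := continuous_bspl_succ hst r i
    have := continuous_bspl_succ hst r (i + 1)
    fun_prop

variable (t) in
/-- Control coefficients with scaled slopes `(c k - c (k - 1)) / (t (k + r) - t k) = σ k`. -/
def coeffOfSlopes (r : ℕ) (c₀ : ℝ) (σ : ℕ → ℝ) (k : ℕ) : ℝ :=
  c₀ + ∑ i ∈ Finset.Ioc 0 k, σ i * (t (i + r) - t i)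

variable (t) in
lemma coeffOfSlopes_succ (r : ℕ) (c₀ : ℝ) (σ : ℕ → ℝ) (k : ℕ) :
    coeffOfSlopes t r c₀ σ (k + 1)
      = coeffOfSlopes t r c₀ σ k + σ (k + 1) * (t (k + 1 + r) - t (k + 1)) := by
  rw [coeffOfSlopes, coeffOfSlopes, Finset.sum_Ioc_succ_top (Nat.zero_le k)]
  ring

lemma hasDerivWithinAt_sum_coeffOfSlopes_mul_bspl (hst : StrictMono t) (r Q : ℕ) (c₀ : ℝ)
    (σ : ℕ → ℝ) {w : ℝ} (hw : w ∈ Ico (t (r + 1)) (t Q)) :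
    HasDerivWithinAt
      (fun x => ∑ k ∈ Finset.range Q, coeffOfSlopes t (r + 1) c₀ σ k * Bspl t (r + 1) k x)
      ((r + 1) * ∑ k ∈ Finset.Ico 1 Q, σ k * Bspl t r k w) (Ici w) w := by
  set c := coeffOfSlopes t (r + 1) c₀ σ
  refine (HasDerivWithinAt.fun_sum fun k _ =>
    (hasDerivWithinAt_bspl hst r k w).const_mul (c k)).congr_deriv ?_
  have hsum := sum_Ico_mul_add_mul_succ (fun k => (r + 1) * c k / (t (k + r + 1) - t k))
    (fun k => -((r + 1) * c k / (t (k + r + 2) - t (k + 1)))) (Bspl t r · w)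
    (bspl_eq_zero_of_le hst.monotone r 0 (by simpa using hw.1))
    (bspl_eq_zero_of_lt hst.monotone r Q hw.2)
  rw [Finset.range_eq_Ico, Finset.mul_sum]
  convert hsum using 1
  · exact Finset.sum_congr rfl fun k _ => by ring
  · refine Finset.sum_congr rfl fun k hk => ?_
    obtain ⟨k, rfl⟩ : ∃ k', k = k' + 1 := ⟨k - 1, by simp at hk; omega⟩
    have hpos : t (k + 1 + r + 1) - t (k + 1) ≠ 0 := sub_ne_zero.2 (hst (by omega)).ne'
    simp only [c, coeffOfSlopes_succ, Nat.add_sub_cancel,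
      show k + r + 2 = k + 1 + r + 1 by omega, show k + 1 + (r + 1) = k + 1 + r + 1 by omega]
    field_simp
    ring

theorem concaveOn_sum_coeffOfSlopes_mul_bspl_of_strictMono (hst : StrictMono t) (r Q : ℕ)
    (c₀ : ℝ) {σ : ℕ → ℝ} (hσ : AntitoneOn σ (Ici 1)) :
    ConcaveOn ℝ (Icc (t (r + 1)) (t Q))
      (fun x => ∑ k ∈ Finset.range Q, coeffOfSlopes t (r + 1) c₀ σ k * Bspl t (r + 1) k x) := by
  have hanti := antitoneOn_sum_bspl hst.monotone r 1 hσ (q := Q)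
  rw [add_comm] at hanti
  exact concaveOn_Icc_of_hasDerivWithinAt_Ici
    (continuous_finsetSum _ fun k _ =>
      continuous_const.mul (continuous_bspl_succ hst r k)).continuousOn
    (fun w hw => hasDerivWithinAt_sum_coeffOfSlopes_mul_bspl hst r Q c₀ σ hw)
    (fun x hx y hy hxy => mul_le_mul_of_nonneg_left (hanti hx hy hxy) (by positivity))

end Univariate

section KnotLimit

variable {ι : Type*} {l : Filter ι} {τ : ι → ℕ → ℝ} {T : ℕ → ℝ}
  (hτ : ∀ m, Monotone (τ m)) (hle : ∀ m i, τ m i ≤ T i)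
  (hlim : ∀ i, Tendsto (fun m => τ m i) l (𝓝 (T i)))
include hτ hle hlim

lemma eventually_bspl_eq_zero_of_knots_eq {s a : ℕ} (x : ℝ) (hT : T (a + s + 1) = T a) :
    ∀ᶠ m in l, Bspl (τ m) s a x = 0 := by
  rcases lt_or_ge x (T a) with hx | hx
  · filter_upwards [(hlim a).eventually (eventually_gt_nhds hx)] with m hm
    exact bspl_eq_zero_of_lt (hτ m) s a hm
  · exact Eventually.of_forall fun m =>
      bspl_eq_zero_of_le (hτ m) s a ((hle m _).trans (hT ▸ hx))

lemma tendsto_div_mul_bspl {s a : ℕ} {x U : ℝ} {u : ι → ℝ} (hu : Tendsto u l (𝓝 U))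
    (hB : Tendsto (fun m => Bspl (τ m) s a x) l (𝓝 (Bspl T s a x))) :
    Tendsto (fun m => u m / (τ m (a + s + 1) - τ m a) * Bspl (τ m) s a x) l
      (𝓝 (U / (T (a + s + 1) - T a) * Bspl T s a x)) := by
  by_cases hT : T (a + s + 1) - T a = 0
  · rw [hT, div_zero, zero_mul]
    refine tendsto_const_nhds.congr' ?_
    filter_upwards [eventually_bspl_eq_zero_of_knots_eq hτ hle hlim x (sub_eq_zero.1 hT)]
      with m hm
    rw [hm, mul_zero]
  · exact (hu.div ((hlim _).sub (hlim a)) hT).mul hB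

/-- Convergence from below is essential: `B^0` is the indicator of `[t i, t (i + 1))`. -/
lemma tendsto_bspl_of_tendsto_knots :
    ∀ (s i : ℕ) (x : ℝ), Tendsto (fun m => Bspl (τ m) s i x) l (𝓝 (Bspl T s i x))
  | 0, i, x => by
    refine tendsto_const_nhds.congr' ?_
    have hiff : ∀ᶠ m in l, (τ m i ≤ x ∧ x < τ m (i + 1)) ↔ (T i ≤ x ∧ x < T (i + 1)) := by
      by_cases h₁ : x < T i
      · filter_upwards [(hlim i).eventually (eventually_gt_nhds h₁)] with m hm
        exact iff_of_false (fun h => not_le.2 hm h.1) (fun h => not_le.2 h₁ h.1)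
      by_cases h₂ : x < T (i + 1)
      · filter_upwards [(hlim (i + 1)).eventually (eventually_gt_nhds h₂)] with m hm
        exact iff_of_true ⟨(hle m i).trans (not_lt.1 h₁), hm⟩ ⟨not_lt.1 h₁, h₂⟩
      · exact Eventually.of_forall fun m =>
          iff_of_false (fun h => h₂ (h.2.trans_le (hle m _))) (fun h => h₂ h.2)
    filter_upwards [hiff] with m hm
    simp only [bspl_zero, hm]
  | s + 1, i, x => by
    have h₂ := tendsto_div_mul_bspl hτ hle hlim ((hlim (i + s + 2)).sub_const x)
      (tendsto_bspl_of_tendsto_knots s (i + 1) x)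
    simp only [show i + 1 + s + 1 = i + s + 2 by omega] at h₂
    exact (tendsto_div_mul_bspl hτ hle hlim (tendsto_const_nhds.sub (hlim i))
      (tendsto_bspl_of_tendsto_knots s i x)).add h₂

end KnotLimit

noncomputable def perturbedKnots (T : ℕ → ℝ) (m i : ℕ) : ℝ := T i - (1 / 2) ^ i / (m + 1)

lemma perturbedKnots_le (T : ℕ → ℝ) (m i : ℕ) : perturbedKnots T m i ≤ T i :=
  sub_le_self _ (by positivity)

lemma strictMono_perturbedKnots {T : ℕ → ℝ} (hT : Monotone T) (m : ℕ) :
    StrictMono (perturbedKnots T m) := by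
  refine strictMono_nat_of_lt_succ fun i => ?_
  have h : (1 / 2 : ℝ) ^ (i + 1) < (1 / 2) ^ i :=
    pow_lt_pow_right_of_lt_one₀ (by norm_num) (by norm_num) (Nat.lt_succ_self i)
  have := div_lt_div_of_pos_right h (by positivity : (0 : ℝ) < m + 1)
  simp only [perturbedKnots]
  linarith [hT (Nat.le_succ i)]

lemma tendsto_perturbedKnots (T : ℕ → ℝ) (i : ℕ) :
    Tendsto (fun m => perturbedKnots T m i) atTop (𝓝 (T i)) := by
  have h := (tendsto_one_div_add_atTop_nhds_zero_nat.const_mul ((1 / 2 : ℝ) ^ i)).const_sub (T i)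
  rw [mul_zero, sub_zero] at h
  exact h.congr fun m => by rw [perturbedKnots, mul_one_div]

theorem concaveOn_sum_coeffOfSlopes_mul_bspl {T : ℕ → ℝ} (hT : Monotone T) (r Q : ℕ) (c₀ : ℝ)
    {σ : ℕ → ℝ} (hσ : AntitoneOn σ (Ici 1)) :
    ConcaveOn ℝ (Ico (T (r + 1)) (T Q))
      (fun x => ∑ k ∈ Finset.range Q, coeffOfSlopes T (r + 1) c₀ σ k * Bspl T (r + 1) k x) := by
  have hτ : ∀ m, Monotone (perturbedKnots T m) := fun m => (strictMono_perturbedKnots hT m).monotone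
  have hlim := tendsto_perturbedKnots T
  refine concaveOn_of_tendsto (l := atTop) (convex_Ico _ _)
    (fun m => concaveOn_sum_coeffOfSlopes_mul_bspl_of_strictMono (strictMono_perturbedKnots hT m)
      r Q c₀ hσ) (fun x hx => ?_) (fun x _ => ?_)
  · filter_upwards [(hlim Q).eventually (eventually_gt_nhds hx.2)] with m hm
    exact ⟨(perturbedKnots_le T m _).trans hx.1, hm.le⟩
  · refine tendsto_finsetSum _ fun k _ => Tendsto.mul ?_
      (tendsto_bspl_of_tendsto_knots hτ (perturbedKnots_le T) hlim _ k x)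
    exact tendsto_const_nhds.add
      (tendsto_finsetSum _ fun i _ => tendsto_const_nhds.mul ((hlim _).sub (hlim i)))

lemma sum_range_add_mul_bspl_eq {t : ℕ → ℝ} (ht : Monotone t) {r : ℕ}
    (hΔ : ∀ i, 0 < t (i + r) - t i) (c : ℕ → ℝ) (n m : ℕ) {x : ℝ} (hx : x ≤ t n) :
    ∑ k ∈ Finset.range (n + m), c k * Bspl t r k x = ∑ k ∈ Finset.range n, c k * Bspl t r k x := by
  rw [Finset.sum_range_add, add_eq_left]
  exact Finset.sum_eq_zero fun k _ => by
    rw [bspl_eq_zero_of_le_left ht _ _ (sub_pos.1 (hΔ _)) (hx.trans (ht (Nat.le_add_right n k))),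
      mul_zero]

lemma coeffOfSlopes_eq {t : ℕ → ℝ} {r n : ℕ} (hΔ : ∀ i, 0 < t (i + r) - t i) {c σ : ℕ → ℝ}
    (hσ : ∀ k, 1 ≤ k → k < n → σ k = (c k - c (k - 1)) / (t (k + r) - t k)) :
    ∀ k < n, coeffOfSlopes t r (c 0) σ k = c k
  | 0, _ => by simp [coeffOfSlopes]
  | k + 1, hk => by
    rw [coeffOfSlopes_succ, coeffOfSlopes_eq hΔ hσ k (by omega), hσ (k + 1) (by omega) hk,
      Nat.add_sub_cancel, div_mul_cancel₀ _ (hΔ (k + 1)).ne']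
    ring

theorem concaveOn_sum_mul_bspl {t : ℕ → ℝ} (ht : Monotone t) {r n : ℕ}
    (hΔ : ∀ i, 0 < t (i + r) - t i) {c : ℕ → ℝ}
    (hc : ∀ k, 2 ≤ k → k < n → (c k - c (k - 1)) / (t (k + r) - t k) ≤
      (c (k - 1) - c (k - 2)) / (t (k - 1 + r) - t (k - 1))) :
    ConcaveOn ℝ (Icc (t r) (t n)) (fun x => ∑ k ∈ Finset.range n, c k * Bspl t r k x) := by
  obtain ⟨r, rfl⟩ : ∃ r', r = r' + 1 :=
    Nat.exists_eq_add_one_of_ne_zero (by rintro rfl; simpa using hΔ 0)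
  set slope : ℕ → ℝ := fun k => (c k - c (k - 1)) / (t (k + (r + 1)) - t k)
  -- continue the control polygon linearly beyond its last vertex
  set σ : ℕ → ℝ := fun k => slope (min k (n - 1))
  have hσ : AntitoneOn σ (Ici 1) := antitoneOn_nat_Ici_of_succ_le fun k hk => by
    by_cases hkn : k + 1 < n
    · have := hc (k + 1) (by omega) hkn
      simp only [Nat.add_sub_cancel, show k + 1 - 2 = k - 1 by omega] at this
      simpa [σ, slope, min_eq_left (by omega : k + 1 ≤ n - 1), min_eq_left (by omega : k ≤ n - 1)]
    · simp [σ, min_eq_right (by omega : n - 1 ≤ k + 1), min_eq_right (by omega : n - 1 ≤ k)]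
  have hcoeff := coeffOfSlopes_eq (n := n) (c := c) (σ := σ) hΔ fun k _ hk => by
    simp [σ, slope, min_eq_left (by omega : k ≤ n - 1)]
  refine ((concaveOn_sum_coeffOfSlopes_mul_bspl ht r (n + (r + 1)) (c 0) hσ).subset
    (Icc_subset_Ico_right (sub_pos.1 (hΔ n))) (convex_Icc _ _)).congr fun x hx => ?_
  dsimp only
  rw [sum_range_add_mul_bspl_eq ht hΔ _ n _ hx.2]
  exact Finset.sum_congr rfl fun k hk => by rw [hcoeff k (Finset.mem_range.1 hk)]

lemma sum_mul_prod_update_eq_sum_mul_sum {α R : Type*} [CommSemiring R] {m : ℕ}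
    {n : Fin (m + 1) → ℕ} (φ : Fin (m + 1) → ℕ → α → R) (a : (Fin (m + 1) → ℕ) → R)
    (j : Fin (m + 1)) (x : Fin (m + 1) → α) (s : α) :
    ∑ i : (∀ l, Fin (n l)), a (fun l => (i l : ℕ)) * ∏ l, φ l (i l) (Function.update x j s l)
      = ∑ o : (∀ l, Fin (n (j.succAbove l))), (∏ l, φ (j.succAbove l) (o l) (x (j.succAbove l))) *
          ∑ k ∈ Finset.range (n j), a (Fin.insertNth j k fun l => (o l : ℕ)) * φ j k s := by
  rw [← (Fin.insertNthEquiv (fun l => Fin (n l)) j).sum_comp, Fintype.sum_prod_type,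
    Finset.sum_comm]
  refine Finset.sum_congr rfl fun o _ => ?_
  rw [Finset.mul_sum, ← Fin.sum_univ_eq_sum_range]
  refine Finset.sum_congr rfl fun k _ => ?_
  have hidx : (fun l => (Fin.insertNth (α := fun l => Fin (n l)) j k o l : ℕ))
      = Fin.insertNth j (k : ℕ) fun l => (o l : ℕ) := by
    rw [Fin.eq_insertNth_iff]
    exact ⟨by simp, funext fun l => by simp [Fin.removeNth]⟩
  simp only [Fin.insertNthEquiv_apply, hidx, Fin.prod_univ_succAbove _ j, Fin.insertNth_apply_same,
    Fin.insertNth_apply_succAbove, Function.update_self,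
    Function.update_of_ne (Fin.succAbove_ne j _)]
  ring

/-- a tensor-product B-spline is concave in coordinate `j` (other variables
held fixed) on the interior knot range if the scaled second differences of the
coefficients in the `j`-th index are nonpositive, where `Δ_{i_j} = t_{j, i_j + r_j} - t_{j, i_j}`. -/
theorem tensor_bspline_concave_in_coordinate
    (N : ℕ) (n r : Fin N → ℕ) (t : Fin N → ℕ → ℝ) (ht : ∀ l, Monotone (t l))
    (a : (Fin N → ℕ) → ℝ) (j : Fin N)
    (hΔ : ∀ i, 0 < t j (i + r j) - t j i)
    (ha : ∀ i : Fin N → ℕ, (∀ l, i l < n l) → 2 ≤ i j →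
      (a i - a (Function.update i j (i j - 1))) / (t j (i j + r j) - t j (i j)) ≤
        (a (Function.update i j (i j - 1)) - a (Function.update i j (i j - 2))) /
          (t j (i j - 1 + r j) - t j (i j - 1)))
    (x : Fin N → ℝ) :
    ConcaveOn ℝ (Set.Icc (t j (r j)) (t j (n j)))
      (fun s => ∑ i : (∀ l : Fin N, Fin (n l)),
        a (fun l => (i l : ℕ)) *
          ∏ l, Bspl (t l) (r l) (i l) (Function.update x j s l)) := by
  obtain ⟨N, rfl⟩ := Nat.exists_eq_add_one_of_ne_zero (Fin.pos j).ne'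
  simp only [sum_mul_prod_update_eq_sum_mul_sum (fun l => Bspl (t l) (r l)) a j x]
  refine concaveOn_finsetSum (convex_Icc _ _) fun o _ =>
    (concaveOn_sum_mul_bspl (ht j) hΔ fun k hk hkn => ?_).smul
      (Finset.prod_nonneg fun l _ => bspl_nonneg (ht _) _ _ _)
  have hlt : ∀ l, (Fin.insertNth j k fun l => (o l : ℕ) : Fin (N + 1) → ℕ) l < n l := fun l => by
    obtain rfl | ⟨l, rfl⟩ := Fin.eq_self_or_eq_succAbove j l <;> simp [hkn]
  simpa using ha _ hlt (by simpa using hk)
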